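/- arXiv:2504.07946 — 7 statements merged into one kernel-verified Lean document; each statement's English description precedes it below -/
import Mathlib

section
/- If X1, X2, X3 are independent Uniform(0,1) random variables and ρ > 0, then E[exp(-ρ|X1 - X3|) · exp(-ρ|X2 - X3|)] = (-e^{-2ρ} + 2e^{-ρ}(ρ+4) + 4ρ - 7)/ρ³. -/
/-!
Integrating out `X₁` and `X₂` first, independence factors the expectation as
`∫₀¹ g(z)² dz` with `g(z) = ∫₀¹ e^{-ρ|x - z|} dx = (2 - e^{-ρz} - e^{-ρ(1-z)}) / ρ`.
Expanding the square, the cross term `e^{-ρz} e^{-ρ(1-z)} = e^{-ρ}` is constant and every other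
term is an exponential in `z`, so `g²` has an explicit antiderivative.
-/

open MeasureTheory Real

/-- The uniform distribution on `[0,1]`. -/
noncomputable def unif : Measure ℝ := volume.restrict (Set.Icc 0 1)

theorem integral_pi_fin_three_mul_eq {𝕜 α : Type*} [RCLike 𝕜] [MeasurableSpace α]
    (μ : Measure α) [SigmaFinite μ] (f g : α → α → 𝕜)
    (hfg : Integrable (fun p : Fin 3 → α => f (p 0) (p 2) * g (p 1) (p 2))
      (Measure.pi fun _ => μ)) :
    ∫ p : Fin 3 → α, f (p 0) (p 2) * g (p 1) (p 2) ∂(Measure.pi fun _ => μ)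
      = ∫ z, (∫ x, f x z ∂μ) * (∫ y, g y z ∂μ) ∂μ := by
  have hsplit := measurePreserving_piFinSuccAbove (fun _ : Fin 3 => μ) 2
  rw [← hsplit.symm.integral_comp', integral_prod]
  · congr 1 with z
    have hprod := integral_fintype_prod_eq_prod (fun i : Fin 2 => ![(f · z), (g · z)] i)
      (μ := fun _ => μ)
    simp only [Fin.prod_univ_two, Matrix.cons_val_zero, Matrix.cons_val_one] at hprod
    exact hprod
  · exact (hsplit.symm.integrable_comp_emb (MeasurableEquiv.measurableEmbedding _)).mpr hfg

theorem integral_exp_neg_mul {ρ : ℝ} (hρ : ρ ≠ 0) (t : ℝ) :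
    ∫ x in (0 : ℝ)..t, exp (-ρ * x) = (1 - exp (-ρ * t)) / ρ := by
  rw [intervalIntegral.integral_comp_mul_left (fun x => exp x) (neg_ne_zero.mpr hρ), integral_exp,
    mul_zero, exp_zero, smul_eq_mul]
  field_simp
  ring

theorem integral_exp_neg_mul_abs_sub {ρ a b z : ℝ} (hρ : ρ ≠ 0) (ha : a ≤ z) (hb : z ≤ b) :
    ∫ x in a..b, exp (-ρ * |x - z|) = (2 - exp (-ρ * (z - a)) - exp (-ρ * (b - z))) / ρ := by
  have hcont : Continuous fun x => exp (-ρ * |x - z|) := by fun_prop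
  rw [← intervalIntegral.integral_add_adjacent_intervals (hcont.intervalIntegrable a z)
    (hcont.intervalIntegrable z b)]
  have hleft : ∫ x in a..z, exp (-ρ * |x - z|) = ∫ x in a..z, exp (-ρ * (z - x)) := by
    refine intervalIntegral.integral_congr fun x hx => ?_
    rw [Set.uIcc_of_le ha] at hx
    simp only [abs_of_nonpos (sub_nonpos.mpr hx.2), neg_sub]
  have hright : ∫ x in z..b, exp (-ρ * |x - z|) = ∫ x in z..b, exp (-ρ * (x - z)) := by
    refine intervalIntegral.integral_congr fun x hx => ?_
    rw [Set.uIcc_of_le hb] at hx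
    simp only [abs_of_nonneg (sub_nonneg.mpr hx.1)]
  rw [hleft, hright, intervalIntegral.integral_comp_sub_left (fun x => exp (-ρ * x)),
    intervalIntegral.integral_comp_sub_right (fun x => exp (-ρ * x)), sub_self,
    integral_exp_neg_mul hρ, integral_exp_neg_mul hρ]
  ring

theorem integral_sq_two_sub_exp_neg_mul {ρ : ℝ} (hρ : ρ ≠ 0) :
    ∫ z in (0 : ℝ)..1, ((2 - exp (-ρ * z) - exp (-ρ * (1 - z))) / ρ) ^ 2
      = (-exp (-(2 * ρ)) + 2 * exp (-ρ) * (ρ + 4) + 4 * ρ - 7) / ρ ^ 3 := by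
  set u : ℝ → ℝ := fun z => exp (-ρ * z) with hu
  set v : ℝ → ℝ := fun z => exp (-ρ * (1 - z)) with hv
  have hu' : ∀ z, HasDerivAt u (-ρ * u z) z := fun z => by
    simpa [hu, mul_comm] using ((hasDerivAt_id z).const_mul (-ρ)).exp
  have hv' : ∀ z, HasDerivAt v (ρ * v z) z := fun z => by
    simpa [hv, mul_comm] using (((hasDerivAt_id z).const_sub 1).const_mul (-ρ)).exp
  have huv : ∀ z, u z * v z = exp (-ρ) := fun z => by
    simp only [hu, hv, ← exp_add]; ring_nf
  -- `u * v = exp (-ρ)` is constant, so the cross term of the square integrates to a linear term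
  let F : ℝ → ℝ := fun z =>
    (4 + 2 * exp (-ρ)) / ρ ^ 2 * z + (v z ^ 2 - u z ^ 2) / (2 * ρ ^ 3) + 4 * (u z - v z) / ρ ^ 3
  have hF : ∀ z, HasDerivAt F (((2 - u z - v z) / ρ) ^ 2) z := fun z => by
    have := (((hasDerivAt_id z).const_mul ((4 + 2 * exp (-ρ)) / ρ ^ 2)).add
      ((((hv' z).pow 2).sub ((hu' z).pow 2)).div_const (2 * ρ ^ 3))).add
      (((hu' z).sub (hv' z)).const_mul 4 |>.div_const (ρ ^ 3))
    refine this.congr_deriv ?_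
    rw [← huv z]
    field_simp
    ring
  rw [intervalIntegral.integral_eq_sub_of_hasDerivAt (fun z _ => hF z)
    (by apply Continuous.intervalIntegrable; fun_prop)]
  simp only [F, hu, hv]
  have hexp_two : exp (-(2 * ρ)) = exp (-ρ) ^ 2 := by rw [← exp_nat_mul]; ring_nf
  rw [hexp_two]
  simp only [mul_one, sub_self, mul_zero, exp_zero, one_pow, sub_zero, zero_add]
  field_simp
  ring

instance : IsProbabilityMeasure unif := ⟨by simp [unif]⟩

theorem integral_unif_eq_intervalIntegral {E : Type*} [NormedAddCommGroup E] [NormedSpace ℝ E]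
    (f : ℝ → E) : ∫ x, f x ∂unif = ∫ x in (0 : ℝ)..1, f x := by
  rw [unif, integral_Icc_eq_integral_Ioc, intervalIntegral.integral_of_le zero_le_one]

theorem exp_neg_mul_abs_le_one {ρ : ℝ} (hρ : 0 ≤ ρ) (t : ℝ) : exp (-ρ * |t|) ≤ 1 :=
  exp_le_one_iff.mpr (by nlinarith [abs_nonneg t])

theorem expectation_triple_exp_abs_diff_uniform (ρ : ℝ) (hρ : 0 < ρ) :
    ∫ p : Fin 3 → ℝ,
        Real.exp (-ρ * |p 0 - p 2|) * Real.exp (-ρ * |p 1 - p 2|)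
          ∂(Measure.pi fun _ => unif)
      = (-Real.exp (-(2 * ρ)) + 2 * Real.exp (-ρ) * (ρ + 4) + 4 * ρ - 7) / ρ ^ 3 := by
  have hint : Integrable (fun p : Fin 3 → ℝ => exp (-ρ * |p 0 - p 2|) * exp (-ρ * |p 1 - p 2|))
      (Measure.pi fun _ => unif) := by
    refine .of_bound (by fun_prop) 1 (ae_of_all _ fun p => ?_)
    rw [norm_of_nonneg (by positivity)]
    exact mul_le_one₀ (exp_neg_mul_abs_le_one hρ.le _) (exp_pos _).le
      (exp_neg_mul_abs_le_one hρ.le _)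
  rw [integral_pi_fin_three_mul_eq unif (fun x z => exp (-ρ * |x - z|))
    (fun x z => exp (-ρ * |x - z|)) hint, integral_unif_eq_intervalIntegral,
    ← integral_sq_two_sub_exp_neg_mul hρ.ne']
  refine intervalIntegral.integral_congr fun z hz => ?_
  rw [Set.uIcc_of_le zero_le_one] at hz
  simp only [integral_unif_eq_intervalIntegral,
    integral_exp_neg_mul_abs_sub hρ.ne' hz.1 hz.2, sub_zero, sq]
end

section
/- For every ρ > 0 and every positive integer k, the equation τ·sin(τ/2) - ρ·cos(τ/2) = 0 has exactly one solution τ in the open interval ((2k-2)π, (2k-1)π). -/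
open Real

/-!
On `(2mπ, (2m+1)π)` both `sin (τ/2)` and `cos (τ/2)` have the sign `(-1)^m`, so after multiplying
by that sign the function `τ sin (τ/2) - ρ cos (τ/2)` has positive derivative
`(1 + ρ/2) sin (τ/2) + (τ/2) cos (τ/2)` there, and goes from `-ρ < 0` at the left end to
`(2m+1)π > 0` at the right end. The intermediate value theorem gives a root, strict monotonicity
its uniqueness.
-/

open Set

theorem StrictMonoOn.existsUnique_mem_Ioo_eq {α δ : Type*} [ConditionallyCompleteLinearOrder α]
    [TopologicalSpace α] [OrderTopology α] [DenselyOrdered α] [LinearOrder δ] [TopologicalSpace δ]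
    [OrderClosedTopology δ] {f : α → δ} {a b : α} {c : δ} (hab : a ≤ b)
    (hf : ContinuousOn f (Icc a b)) (hmono : StrictMonoOn f (Icc a b)) (ha : f a < c)
    (hb : c < f b) : ∃! x, x ∈ Ioo a b ∧ f x = c := by
  obtain ⟨x, hx, hfx⟩ := intermediate_value_Ioo hab hf ⟨ha, hb⟩
  exact ⟨x, ⟨hx, hfx⟩, fun y ⟨hy, hfy⟩ =>
    hmono.injOn (Ioo_subset_Icc_self hy) (Ioo_subset_Icc_self hx) (hfy.trans hfx.symm)⟩

namespace Real

theorem neg_one_pow_mul_sin_pos {m : ℕ} {x : ℝ} (hx : x ∈ Ioo (m * π) (m * π + π)) :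
    0 < (-1) ^ m * sin x := by
  rw [← sin_sub_nat_mul_pi]
  exact sin_pos_of_pos_of_lt_pi (by linarith [hx.1]) (by linarith [hx.2])

theorem neg_one_pow_mul_cos_pos {m : ℕ} {x : ℝ} (hx : x ∈ Ioo (m * π - π / 2) (m * π + π / 2)) :
    0 < (-1) ^ m * cos x := by
  rw [← cos_sub_nat_mul_pi]
  exact cos_pos_of_mem_Ioo ⟨by linarith [hx.1], by linarith [hx.2]⟩

end Real

/-- The characteristic equation `tan (τ/2) = ρ/τ`, cleared of denominators, is `charFn ρ τ = 0`. -/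
noncomputable def charFn (ρ τ : ℝ) : ℝ :=
  τ * sin (τ / 2) - ρ * cos (τ / 2)

theorem continuous_charFn (ρ : ℝ) : Continuous (charFn ρ) := by
  unfold charFn
  fun_prop

theorem hasDerivAt_charFn (ρ τ : ℝ) :
    HasDerivAt (charFn ρ) ((1 + ρ / 2) * sin (τ / 2) + τ / 2 * cos (τ / 2)) τ := by
  have hhalf : HasDerivAt (fun x : ℝ => x / 2) (1 / 2) τ := (hasDerivAt_id τ).div_const 2
  exact (((hasDerivAt_id' τ).mul hhalf.sin).sub (hhalf.cos.const_mul ρ)).congr_deriv (by ring)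

theorem charFn_two_mul_nat_mul_pi (ρ : ℝ) (m : ℕ) :
    charFn ρ (2 * m * π) = -((-1) ^ m * ρ) := by
  have hhalf : 2 * m * π / 2 = m * π := by ring
  simp only [charFn, hhalf, sin_nat_mul_pi, cos_nat_mul_pi]
  ring

theorem charFn_two_mul_nat_add_one_mul_pi (ρ : ℝ) (m : ℕ) :
    charFn ρ ((2 * m + 1) * π) = (-1) ^ m * ((2 * m + 1) * π) := by
  have hhalf : (2 * m + 1) * π / 2 = π / 2 + m * π := by ring
  simp only [charFn, hhalf, sin_add_nat_mul_pi, cos_add_nat_mul_pi, sin_pi_div_two,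
    cos_pi_div_two]
  ring

theorem strictMonoOn_neg_one_pow_mul_charFn {ρ : ℝ} (hρ : 0 ≤ ρ) (m : ℕ) :
    StrictMonoOn (fun τ => (-1) ^ m * charFn ρ τ) (Icc (2 * m * π) ((2 * m + 1) * π)) := by
  refine strictMonoOn_of_deriv_pos (convex_Icc _ _)
    (continuous_const.mul (continuous_charFn ρ)).continuousOn fun τ hτ => ?_
  rw [interior_Icc] at hτ
  have hhalf : τ / 2 ∈ Ioo (m * π) (m * π + π / 2) :=
    ⟨by linarith [hτ.1], by linarith [hτ.2]⟩
  have hsin := neg_one_pow_mul_sin_pos ⟨hhalf.1, by linarith [hhalf.2, pi_pos]⟩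
  have hcos := neg_one_pow_mul_cos_pos ⟨by linarith [hhalf.1, pi_pos], hhalf.2⟩
  have hτ_pos : 0 < τ / 2 := by
    linarith [hhalf.1, mul_nonneg (Nat.cast_nonneg m) pi_pos.le]
  rw [((hasDerivAt_charFn ρ τ).const_mul _).deriv]
  have hexpand : (-1) ^ m * ((1 + ρ / 2) * sin (τ / 2) + τ / 2 * cos (τ / 2)) =
      (1 + ρ / 2) * ((-1) ^ m * sin (τ / 2)) + τ / 2 * ((-1) ^ m * cos (τ / 2)) := by ring
  rw [hexpand]
  positivity

theorem existsUnique_charFn_eq_zero {ρ : ℝ} (hρ : 0 < ρ) (m : ℕ) :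
    ∃! τ, τ ∈ Ioo (2 * m * π) ((2 * m + 1) * π) ∧ charFn ρ τ = 0 := by
  have hsign : ((-1 : ℝ) ^ m) * (-1) ^ m = 1 := by rw [← mul_pow]; norm_num
  have hsign_ne : ((-1 : ℝ) ^ m) ≠ 0 := by positivity
  have hend : 2 * m * π < (2 * m + 1) * π := by linarith [pi_pos]
  have hroot := StrictMonoOn.existsUnique_mem_Ioo_eq (f := fun τ => (-1) ^ m * charFn ρ τ)
    (c := 0) hend.le (continuous_const.mul (continuous_charFn ρ)).continuousOn
    (strictMonoOn_neg_one_pow_mul_charFn hρ.le m)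
    (by rw [charFn_two_mul_nat_mul_pi, mul_neg, ← mul_assoc, hsign]; linarith)
    (by rw [charFn_two_mul_nat_add_one_mul_pi, ← mul_assoc, hsign]; positivity)
  simpa only [mul_eq_zero, hsign_ne, false_or] using hroot

theorem char_eq_A1_unique_root (ρ : ℝ) (hρ : 0 < ρ) (k : ℕ) (hk : 1 ≤ k) :
    ∃! τ : ℝ, τ ∈ Set.Ioo ((2 * (k : ℝ) - 2) * π) ((2 * (k : ℝ) - 1) * π) ∧
      τ * Real.sin (τ / 2) - ρ * Real.cos (τ / 2) = 0 := by
  obtain ⟨m, rfl⟩ := Nat.exists_eq_add_of_le' hk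
  have hleft : (2 * ((m + 1 : ℕ) : ℝ) - 2) * π = 2 * m * π := by push_cast; ring
  have hright : (2 * ((m + 1 : ℕ) : ℝ) - 1) * π = (2 * m + 1) * π := by push_cast; ring
  rw [hleft, hright]
  exact existsUnique_charFn_eq_zero hρ m
end

section
/- For every ρ > 0 and every positive integer k, the equation ρ·sin(τ/2) + τ·cos(τ/2) = 0 has exactly one solution τ in the open interval ((2k-1)π, 2kπ). -/
open Real

theorem char_eq_A2_unique_root (ρ : ℝ) (hρ : 0 < ρ) (k : ℕ) (hk : 1 ≤ k) :
    ∃! τ : ℝ, τ ∈ Set.Ioo ((2 * (k : ℝ) - 1) * π) (2 * (k : ℝ) * π) ∧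
      ρ * Real.sin (τ / 2) + τ * Real.cos (τ / 2) = 0 := by
  have hπ := Real.pi_pos
  set a : ℝ := (2 * (k : ℝ) - 1) * π with ha
  set b : ℝ := 2 * (k : ℝ) * π with hb
  have hab : a < b := by
    rw [ha, hb]; nlinarith
  set f : ℝ → ℝ := fun τ => ρ * Real.sin (τ / 2) + τ * Real.cos (τ / 2) with hf
  -- values at the end points
  have ha2 : a / 2 = (k : ℝ) * π - π / 2 := by rw [ha]; ring
  have hb2 : b / 2 = (k : ℝ) * π := by rw [hb]; ring
  have hfa : f a = -((-1) ^ k * ρ) := by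
    simp only [hf, ha2, Real.sin_nat_mul_pi_sub, Real.cos_nat_mul_pi_sub,
      Real.sin_pi_div_two, Real.cos_pi_div_two]
    ring
  have hcoskπ : Real.cos ((k : ℝ) * π) = (-1) ^ k := by
    simpa using Real.cos_nat_mul_pi_sub 0 k
  have hfb : f b = (-1) ^ k * b := by
    simp only [hf, hb2, Real.sin_nat_mul_pi, hcoskπ]
    ring
  have hbpos : 0 < b := by
    rw [hb]; positivity
  have hcont : ContinuousOn f (Set.Icc a b) := by fun_prop
  -- key reformulation on the open interval
  have key : ∀ τ ∈ Set.Ioo a b, (f τ = 0 ↔ τ = ρ * Real.tan ((k : ℝ) * π - τ / 2)) := by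
    intro τ hτ
    set x : ℝ := (k : ℝ) * π - τ / 2 with hx
    clear_value x
    have hx0 : 0 < x := by
      rw [hx]; have := hτ.2; rw [hb] at this; linarith
    have hx2 : x < π / 2 := by
      rw [hx]; have := hτ.1; rw [ha] at this; linarith
    have hτ2 : τ / 2 = (k : ℝ) * π - x := by rw [hx]; ring
    have hcos : 0 < Real.cos x := Real.cos_pos_of_mem_Ioo ⟨by nlinarith, hx2⟩
    have hsin : Real.sin (τ / 2) = -((-1) ^ k * Real.sin x) := by
      rw [hτ2, Real.sin_nat_mul_pi_sub]
    have hcos2 : Real.cos (τ / 2) = (-1) ^ k * Real.cos x := by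
      rw [hτ2, Real.cos_nat_mul_pi_sub]
    have hpow : ((-1 : ℝ)) ^ k ≠ 0 := by positivity
    rw [hf]
    simp only [hsin, hcos2, Real.tan_eq_sin_div_cos]
    rw [show ρ * -((-1 : ℝ) ^ k * Real.sin x) + τ * ((-1 : ℝ) ^ k * Real.cos x)
        = (-1 : ℝ) ^ k * (τ * Real.cos x - ρ * Real.sin x) from by ring]
    rw [mul_eq_zero, or_iff_right hpow, sub_eq_zero, ← mul_div_assoc,
      eq_div_iff hcos.ne']
  -- strict monotonicity of φ τ = τ - ρ * tan (kπ - τ/2)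
  have hmono : StrictMonoOn (fun τ => τ - ρ * Real.tan ((k : ℝ) * π - τ / 2)) (Set.Ioo a b) := by
    intro τ₁ h₁ τ₂ h₂ hlt
    have hx0 : (0:ℝ) ≤ (k : ℝ) * π - τ₂ / 2 := by
      have := h₂.2; rw [hb] at this; linarith
    have hx2 : (k : ℝ) * π - τ₁ / 2 < π / 2 := by
      have := h₁.1; rw [ha] at this; linarith
    have := Real.tan_lt_tan_of_nonneg_of_lt_pi_div_two hx0 hx2 (by linarith)
    simp only
    nlinarith
  -- existence via IVT
  have hex : ∃ τ ∈ Set.Ioo a b, f τ = 0 := by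
    rcases Nat.even_or_odd k with he | ho
    · have hpk : ((-1 : ℝ)) ^ k = 1 := he.neg_one_pow
      have h0 : (0:ℝ) ∈ Set.Ioo (f a) (f b) := by
        rw [hfa, hfb, hpk]; constructor <;> simp <;> linarith
      obtain ⟨τ, hτ, hfτ⟩ := intermediate_value_Ioo hab.le hcont h0
      exact ⟨τ, hτ, hfτ⟩
    · have hpk : ((-1 : ℝ)) ^ k = -1 := ho.neg_one_pow
      have h0 : (0:ℝ) ∈ Set.Ioo (f b) (f a) := by
        rw [hfa, hfb, hpk]; constructor <;> simp <;> linarith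
      obtain ⟨τ, hτ, hfτ⟩ := intermediate_value_Ioo' hab.le hcont h0
      exact ⟨τ, hτ, hfτ⟩
  obtain ⟨τ, hτmem, hτ0⟩ := hex
  refine ⟨τ, ⟨hτmem, hτ0⟩, ?_⟩
  intro σ ⟨hσmem, hσ0⟩
  have e1 : σ = ρ * Real.tan ((k : ℝ) * π - σ / 2) := (key σ hσmem).mp hσ0
  have e2 : τ = ρ * Real.tan ((k : ℝ) * π - τ / 2) := (key τ hτmem).mp hτ0
  have : (fun τ => τ - ρ * Real.tan ((k : ℝ) * π - τ / 2)) σ =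
      (fun τ => τ - ρ * Real.tan ((k : ℝ) * π - τ / 2)) τ := by
    simp only; linarith
  exact hmono.injOn hσmem hτmem this
end

section
/- For ρ > 0 and τ > 0 with τ not a multiple of 2π, letting u_j = 2ρ/((2πj)² + ρ²) and λ = 2ρ/(τ² + ρ²), the infinite series identity Σ_{j=1}^∞ u_j²/(u_j - λ) = (ρ/(2τ))·cot(τ/2) + (1/2)·coth(ρ/2) - (2/ρ²)/((2/ρ) - λ) holds, provided λ ≠ u_j for all j. -/
open Real

/-!
With `a = 2πj`, `u = 2ρ/(a² + ρ²)` and `λ = 2ρ/(τ² + ρ²)` one has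
`u - λ = 2ρ(τ² - a²)/((a² + ρ²)(τ² + ρ²))`, so each summand splits as
`u²/(u - λ) = u + 2ρ/(τ² - a²)`. The two resulting series are the Mittag-Leffler expansions of
`coth (ρ/2)` and `cot (τ/2)`, both read off from that of `π cot (π x)` (at `x = ρi/(2π)` and
`x = τ/(2π)`), and `(2/ρ²)/(2/ρ - λ) = 1/ρ + ρ/τ²` is what their `j = 0` terms contribute.
-/

open Complex in
theorem Complex.hasSum_two_mul_div_sq_sub_sq {x : ℂ} (hx : x ∈ integerComplement) :
    HasSum (fun n : ℕ ↦ 2 * x / (x ^ 2 - (n + 1) ^ 2)) (π * cot (π * x) - 1 / x) := by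
  rw [cot_series_rep' hx]
  refine (summable_cotTerm hx).hasSum.congr_fun fun n ↦ ?_
  rw [cotTerm_identity hx]
  ring

open Complex in
theorem Complex.hasSum_two_mul_div_sq_sub_two_pi_mul_sq {z : ℂ}
    (hz : z / (2 * π) ∈ integerComplement) :
    HasSum (fun n : ℕ ↦ 2 * z / (z ^ 2 - (2 * π * (n + 1)) ^ 2)) (cot (z / 2) / 2 - 1 / z) := by
  have hπ : (π : ℂ) ≠ 0 := ofReal_ne_zero.mpr pi_ne_zero
  have hz₀ : z ≠ 0 := by simpa [hπ] using integerComplement.ne_zero hz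
  have h := (hasSum_two_mul_div_sq_sub_sq hz).div_const (2 * π)
  rw [show (π : ℂ) * (z / (2 * π)) = z / 2 by field_simp] at h
  rw [show cot (z / 2) / 2 - 1 / z = (π * cot (z / 2) - 1 / (z / (2 * π))) / (2 * π) by
    field_simp]
  exact h.congr_fun fun n ↦ by field_simp

theorem Real.hasSum_two_mul_div_sq_sub_two_pi_mul_sq {τ : ℝ} (hτ : ∀ n : ℤ, τ ≠ 2 * π * n) :
    HasSum (fun n : ℕ ↦ 2 * τ / (τ ^ 2 - (2 * π * (n + 1)) ^ 2)) (cot (τ / 2) / 2 - 1 / τ) := by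
  have hmem : (τ : ℂ) / (2 * π) ∈ Complex.integerComplement := by
    rintro ⟨n, hn⟩
    have hπ : (π : ℂ) ≠ 0 := Complex.ofReal_ne_zero.mpr pi_ne_zero
    refine hτ n (Complex.ofReal_injective ?_)
    push_cast
    rw [hn]
    field_simp
  rw [← Complex.hasSum_ofReal]
  push_cast [Complex.ofReal_cot]
  exact Complex.hasSum_two_mul_div_sq_sub_two_pi_mul_sq hmem

theorem Real.hasSum_two_mul_div_two_pi_mul_sq_add_sq {ρ : ℝ} (hρ : ρ ≠ 0) :
    HasSum (fun n : ℕ ↦ 2 * ρ / ((2 * π * (n + 1)) ^ 2 + ρ ^ 2))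
      (cosh (ρ / 2) / sinh (ρ / 2) / 2 - 1 / ρ) := by
  have hmem : ρ * Complex.I / (2 * π) ∈ Complex.integerComplement := by
    rintro ⟨n, hn⟩
    have := congrArg Complex.im hn
    simp [Complex.div_im, eq_div_iff, pi_ne_zero, hρ] at this
  have hρ' : (ρ : ℂ) ≠ 0 := by exact_mod_cast hρ
  have hsinh : Complex.sinh (ρ / 2) ≠ 0 := by
    exact_mod_cast sinh_ne_zero.mpr (div_ne_zero hρ two_ne_zero)
  have h := (Complex.hasSum_two_mul_div_sq_sub_two_pi_mul_sq hmem).mul_left Complex.I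
  rw [mul_div_right_comm, Complex.cot_eq_cos_div_sin, Complex.cos_mul_I,
    Complex.sin_mul_I] at h
  rw [← Complex.hasSum_ofReal, show ((cosh (ρ / 2) / sinh (ρ / 2) / 2 - 1 / ρ : ℝ) : ℂ) =
      Complex.I * (Complex.cosh (ρ / 2) / (Complex.sinh (ρ / 2) * Complex.I) / 2
        - 1 / (ρ * Complex.I)) by push_cast; field_simp]
  refine h.congr_fun fun n ↦ ?_
  rw [show ((ρ : ℂ) * Complex.I) ^ 2 - (2 * π * (n + 1)) ^ 2 = -((2 * π * (n + 1)) ^ 2 + ρ ^ 2) by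
    rw [mul_pow, Complex.I_sq]; ring, div_neg]
  push_cast
  linear_combination (2 * ρ / ((2 * π * (n + 1)) ^ 2 + ρ ^ 2) : ℂ) * Complex.I_sq

theorem sq_div_div_sub_div {K : Type*} [Field K] {c p q : K} (hp : p ≠ 0) (hq : q ≠ 0)
    (hpq : p ≠ q) : (c / p) ^ 2 / (c / p - c / q) = c / p + c / (q - p) := by
  rcases eq_or_ne c 0 with rfl | hc
  · simp
  have : q - p ≠ 0 := sub_ne_zero.mpr hpq.symm
  field_simp
  ring

theorem series_identity_A1_general (ρ τ : ℝ) (hρ : 0 < ρ) (hτ : 0 < τ)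
    (hτ2 : ∀ j : ℕ, τ ≠ 2 * π * j)
    (u : ℕ → ℝ) (hu : ∀ j, u j = 2 * ρ / ((2 * π * j) ^ 2 + ρ ^ 2))
    (lam : ℝ) (hlam : lam = 2 * ρ / (τ ^ 2 + ρ ^ 2)) :
    ∑' j : ℕ, (u (j + 1)) ^ 2 / (u (j + 1) - lam)
      = ρ / (2 * τ) * (Real.cos (τ / 2) / Real.sin (τ / 2))
        + (Real.cosh (ρ / 2) / Real.sinh (ρ / 2)) / 2
        - (2 / ρ ^ 2) / (2 / ρ - lam) := by
  have hτℤ : ∀ n : ℤ, τ ≠ 2 * π * n := by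
    intro n
    obtain ⟨m, rfl | rfl⟩ := Int.eq_nat_or_neg n
    · exact_mod_cast hτ2 m
    · have : 0 ≤ π * m := by positivity
      push_cast
      linarith
  have hterm : ∀ j : ℕ, u (j + 1) ^ 2 / (u (j + 1) - lam) = 2 * ρ / ((2 * π * (j + 1)) ^ 2 + ρ ^ 2)
      + ρ / τ * (2 * τ / (τ ^ 2 - (2 * π * (j + 1)) ^ 2)) := by
    intro j
    have hpq : (2 * π * (j + 1)) ^ 2 + ρ ^ 2 ≠ τ ^ 2 + ρ ^ 2 := by
      rw [ne_eq, add_left_inj, sq_eq_sq₀ (by positivity) hτ.le]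
      exact_mod_cast (hτ2 (j + 1)).symm
    rw [hu, hlam]
    push_cast
    rw [sq_div_div_sub_div (by positivity) (by positivity) hpq, add_sub_add_right_eq_sub]
    field_simp
  have hsum := (hasSum_two_mul_div_two_pi_mul_sq_add_sq hρ.ne').add
    ((hasSum_two_mul_div_sq_sub_two_pi_mul_sq hτℤ).mul_left (ρ / τ))
  rw [(hsum.congr_fun hterm).tsum_eq, hlam, cot_eq_cos_div_sin]
  field_simp
  ring

theorem series_identity_A1 (ρ τ : ℝ) (hρ : 0 < ρ) (hτ : 0 < τ)
    (hτ2 : ∀ j : ℕ, τ ≠ 2 * π * j)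
    (u : ℕ → ℝ) (hu : ∀ j, u j = 2 * ρ / ((2 * π * j) ^ 2 + ρ ^ 2))
    (lam : ℝ) (hlam : lam = 2 * ρ / (τ ^ 2 + ρ ^ 2))
    (hne : ∀ j : ℕ, 1 ≤ j → lam ≠ u j) :
    ∑' j : ℕ, (u (j + 1)) ^ 2 / (u (j + 1) - lam)
      = ρ / (2 * τ) * (Real.cos (τ / 2) / Real.sin (τ / 2))
        + (Real.cosh (ρ / 2) / Real.sinh (ρ / 2)) / 2
        - (2 / ρ ^ 2) / (2 / ρ - lam) :=
  series_identity_A1_general ρ τ hρ hτ hτ2 u hu lam hlam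
end

section
/- For ρ > 0 and τ > 0 with τ not a multiple of 2π, letting u_j = 2ρ/((2πj)² + ρ²), v_j = (2πj/ρ)u_j, and λ = 2ρ/(τ² + ρ²), the infinite series identity Σ_{j=1}^∞ v_j²/(u_j - λ) = (τ/(2ρ))·cot(τ/2) - (1/2)·coth(ρ/2) holds, provided λ ≠ u_j for all j. -/
/-!
With `s = 2πj`, the `j`-th term splits into partial fractions as
`(τ/ρ) · 2τ/(τ² - s²) - 2ρ/(s² + ρ²)`. Both pieces are summed by the Mittag-Leffler expansion
`π cot (πx) = 1/x + Σₙ 2x/(x² - n²)`, at `x = τ/(2π)` and, for the hyperbolic piece, at the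
imaginary point `x = iρ/(2π)`; the two `1/ρ` constants cancel.
-/

open Real

theorem Complex.hasSum_cot_series {x : ℂ} (hx : x ∈ Complex.integerComplement) :
    HasSum (fun n : ℕ => 2 * x / (x ^ 2 - (n + 1) ^ 2)) (π * Complex.cot (π * x) - 1 / x) := by
  rw [cot_series_rep' hx]
  refine ((summable_cotTerm hx).hasSum).congr_fun fun n => ?_
  rw [cotTerm_identity hx n]
  ring

theorem Real.hasSum_cot_series {x : ℝ} (hx : ∀ n : ℤ, x ≠ n) :
    HasSum (fun n : ℕ => 2 * x / (x ^ 2 - (n + 1) ^ 2))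
      (π * (Real.cos (π * x) / Real.sin (π * x)) - 1 / x) := by
  have hx' : (x : ℂ) ∈ Complex.integerComplement := by
    rintro ⟨n, hn⟩
    exact hx n (by exact_mod_cast hn.symm)
  rw [← Real.cot_eq_cos_div_sin]
  exact_mod_cast Complex.hasSum_cot_series hx'

theorem Real.hasSum_coth_series {y : ℝ} (hy : y ≠ 0) :
    HasSum (fun n : ℕ => 2 * y / (y ^ 2 + (n + 1) ^ 2))
      (π * (Real.cosh (π * y) / Real.sinh (π * y)) - 1 / y) := by
  have hyI : (y : ℂ) * Complex.I ∈ Complex.integerComplement := by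
    rintro ⟨n, hn⟩
    exact hy (by simpa using congrArg Complex.im hn.symm)
  have h := (Complex.hasSum_cot_series hyI).mul_left Complex.I
  rw [Complex.cot_eq_cos_div_sin, show (π : ℂ) * (y * Complex.I) = (π * y : ℂ) * Complex.I by
    ring, Complex.cos_mul_I, Complex.sin_mul_I] at h
  have hval : ((π * (Real.cosh (π * y) / Real.sinh (π * y)) - 1 / y : ℝ) : ℂ) =
      Complex.I * (π * (Complex.cosh (π * y) / (Complex.sinh (π * y) * Complex.I))
        - 1 / (y * Complex.I)) := by
    push_cast
    field_simp
  rw [← Complex.hasSum_ofReal, hval]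
  refine h.congr_fun fun n => ?_
  have hden : (y : ℂ) ^ 2 + (n + 1) ^ 2 ≠ 0 := by
    exact_mod_cast (by positivity : y ^ 2 + ((n : ℝ) + 1) ^ 2 ≠ 0)
  rw [show ((y : ℂ) * Complex.I) ^ 2 - (n + 1) ^ 2 = -(y ^ 2 + (n + 1) ^ 2) by
    linear_combination (y : ℂ) ^ 2 * Complex.I_sq]
  push_cast
  field_simp
  linear_combination (y : ℂ) * Complex.I_sq

theorem sq_sub_sq_two_pi_mul_ne_zero {τ : ℝ} (hτ : ∀ n : ℤ, τ ≠ 2 * π * n) (n : ℕ) :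
    τ ^ 2 - (2 * π * (n + 1)) ^ 2 ≠ 0 := by
  rw [sq_sub_sq]
  refine mul_ne_zero (fun h => hτ (-(n + 1)) ?_) (fun h => hτ (n + 1) ?_) <;> push_cast <;> linarith

theorem hasSum_cot_half_series {τ : ℝ} (hτ : ∀ n : ℤ, τ ≠ 2 * π * n) :
    HasSum (fun n : ℕ => 2 * τ / (τ ^ 2 - (2 * π * (n + 1)) ^ 2))
      (Real.cos (τ / 2) / Real.sin (τ / 2) / 2 - 1 / τ) := by
  have hx : ∀ n : ℤ, τ / (2 * π) ≠ n := fun n h => hτ n (by field_simp at h; linarith)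
  have h := (Real.hasSum_cot_series hx).div_const (2 * π)
  rw [show π * (τ / (2 * π)) = τ / 2 by field_simp] at h
  have hval : Real.cos (τ / 2) / Real.sin (τ / 2) / 2 - 1 / τ
      = (π * (Real.cos (τ / 2) / Real.sin (τ / 2)) - 1 / (τ / (2 * π))) / (2 * π) := by
    field_simp
  rw [hval]
  refine h.congr_fun fun n => ?_
  have := sq_sub_sq_two_pi_mul_ne_zero hτ n
  field_simp

theorem hasSum_coth_half_series {ρ : ℝ} (hρ : ρ ≠ 0) :
    HasSum (fun n : ℕ => 2 * ρ / ((2 * π * (n + 1)) ^ 2 + ρ ^ 2))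
      (Real.cosh (ρ / 2) / Real.sinh (ρ / 2) / 2 - 1 / ρ) := by
  have h := (Real.hasSum_coth_series (div_ne_zero hρ Real.two_pi_pos.ne')).div_const (2 * π)
  rw [show π * (ρ / (2 * π)) = ρ / 2 by field_simp] at h
  have hval : Real.cosh (ρ / 2) / Real.sinh (ρ / 2) / 2 - 1 / ρ
      = (π * (Real.cosh (ρ / 2) / Real.sinh (ρ / 2)) - 1 / (ρ / (2 * π))) / (2 * π) := by
    field_simp
  rw [hval]
  refine h.congr_fun fun n => ?_
  field_simp
  ring

-- With `s = 2πj`, the left side is the term `v_j ^ 2 / (u_j - λ)` of the secular equation.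
theorem secular_term_eq {ρ τ s : ℝ} (hρ : ρ ≠ 0) (hτs : τ ^ 2 - s ^ 2 ≠ 0) :
    (s / ρ * (2 * ρ / (s ^ 2 + ρ ^ 2))) ^ 2 / (2 * ρ / (s ^ 2 + ρ ^ 2) - 2 * ρ / (τ ^ 2 + ρ ^ 2))
      = τ / ρ * (2 * τ / (τ ^ 2 - s ^ 2)) - 2 * ρ / (s ^ 2 + ρ ^ 2) := by
  have hs : s ^ 2 + ρ ^ 2 ≠ 0 := by positivity
  have hτρ : τ ^ 2 + ρ ^ 2 ≠ 0 := by positivity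
  have hdiff : 2 * ρ / (s ^ 2 + ρ ^ 2) - 2 * ρ / (τ ^ 2 + ρ ^ 2)
      = 2 * ρ * (τ ^ 2 - s ^ 2) / ((s ^ 2 + ρ ^ 2) * (τ ^ 2 + ρ ^ 2)) := by
    field_simp
    ring
  rw [hdiff]
  field_simp
  ring

theorem series_identity_A2_general (ρ τ : ℝ) (hρ : 0 < ρ) (hτ : 0 < τ)
    (hτ2 : ∀ j : ℕ, τ ≠ 2 * π * j)
    (u : ℕ → ℝ) (hu : ∀ j, u j = 2 * ρ / ((2 * π * j) ^ 2 + ρ ^ 2))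
    (v : ℕ → ℝ) (hv : ∀ j, v j = (2 * π * j / ρ) * u j)
    (lam : ℝ) (hlam : lam = 2 * ρ / (τ ^ 2 + ρ ^ 2)) :
    ∑' j : ℕ, (v (j + 1)) ^ 2 / (u (j + 1) - lam)
      = τ / (2 * ρ) * (Real.cos (τ / 2) / Real.sin (τ / 2))
        - (Real.cosh (ρ / 2) / Real.sinh (ρ / 2)) / 2 := by
  have hτℤ : ∀ n : ℤ, τ ≠ 2 * π * n := by
    intro n
    rcases Int.eq_nat_or_neg n with ⟨m, rfl | rfl⟩
    · exact_mod_cast hτ2 m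
    · have : 0 ≤ 2 * π * m := by positivity
      push_cast
      linarith
  have hterm : ∀ j : ℕ, v (j + 1) ^ 2 / (u (j + 1) - lam)
      = τ / ρ * (2 * τ / (τ ^ 2 - (2 * π * (j + 1)) ^ 2))
        - 2 * ρ / ((2 * π * (j + 1)) ^ 2 + ρ ^ 2) := by
    intro j
    rw [hv, hu, hlam]
    push_cast
    exact secular_term_eq hρ.ne' (sq_sub_sq_two_pi_mul_ne_zero hτℤ j)
  rw [tsum_congr hterm, (((hasSum_cot_half_series hτℤ).mul_left (τ / ρ)).sub
    (hasSum_coth_half_series hρ.ne')).tsum_eq]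
  field_simp
  ring

theorem series_identity_A2 (ρ τ : ℝ) (hρ : 0 < ρ) (hτ : 0 < τ)
    (hτ2 : ∀ j : ℕ, τ ≠ 2 * π * j)
    (u : ℕ → ℝ) (hu : ∀ j, u j = 2 * ρ / ((2 * π * j) ^ 2 + ρ ^ 2))
    (v : ℕ → ℝ) (hv : ∀ j, v j = (2 * π * j / ρ) * u j)
    (lam : ℝ) (hlam : lam = 2 * ρ / (τ ^ 2 + ρ ^ 2))
    (hne : ∀ j : ℕ, 1 ≤ j → lam ≠ u j) :
    ∑' j : ℕ, (v (j + 1)) ^ 2 / (u (j + 1) - lam)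
      = τ / (2 * ρ) * (Real.cos (τ / 2) / Real.sin (τ / 2))
        - (Real.cosh (ρ / 2) / Real.sinh (ρ / 2)) / 2 :=
  series_identity_A2_general ρ τ hρ hτ hτ2 u hu v hv lam hlam
end

section
/- For ρ > 0, the series Σ_{j=1}^∞ (2ρ/((2πj)² + ρ²))² equals (ρ² + ρ·sinh(ρ) - 4cosh(ρ) + 4) / (2ρ²(cosh(ρ) - 1)). -/
/-!
The 1-periodic function equal to `cosh (ρ * (x - 1/2))` on `[0, 1]` has Fourier coefficients
`sinh (ρ/2) * 2ρ / ((2πn)² + ρ²)` and mean square `1/2 + sinh ρ / (2ρ)` over a period.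
Parseval's identity, the evenness of the coefficients in `n`, and `cosh ρ - 1 = 2 sinh² (ρ/2)`
then give the closed form.
-/

open Real Complex MeasureTheory

theorem Function.Even.hasSum_nat_succ {G : Type*} [AddCommGroup G] [TopologicalSpace G]
    [IsTopologicalAddGroup G] {f : ℤ → G} (hf : f.Even) {a : G} (h : HasSum f a) :
    HasSum (fun n : ℕ => 2 • f (n + 1)) (a - f 0) := by
  have hpair : HasSum (fun n : ℕ => 2 • f n) (a + f 0) := by
    simpa only [hf _, two_nsmul] using h.nat_add_neg
  simpa [two_nsmul] using (hasSum_nat_add_iff' 1).mpr hpair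

theorem fourierCoeffOn_add {E : Type*} [NormedAddCommGroup E] [NormedSpace ℂ E]
    {a b : ℝ} (hab : a < b) {f g : ℝ → E}
    (hf : IntervalIntegrable f volume a b) (hg : IntervalIntegrable g volume a b) (n : ℤ) :
    fourierCoeffOn hab (fun x => f x + g x) n
      = fourierCoeffOn hab f n + fourierCoeffOn hab g n := by
  have hfourier :
      ContinuousOn (fun x : ℝ => fourier (-n) (x : AddCircle (b - a))) (Set.uIcc a b) :=
    ((map_continuous _).comp (AddCircle.continuous_mk' _)).continuousOn
  simp only [fourierCoeffOn_eq_integral, smul_add]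
  rw [intervalIntegral.integral_add (hf.continuousOn_smul hfourier) (hg.continuousOn_smul hfourier),
    smul_add]

theorem fourierCoeffOn_exp_mul (c : ℂ) (n : ℤ) (hc : c - 2 * π * I * n ≠ 0) :
    fourierCoeffOn zero_lt_one (fun x : ℝ => cexp (c * x)) n
      = (cexp c - 1) / (c - 2 * π * I * n) := by
  have hprod (x : ℝ) : fourier (-n) (x : AddCircle ((1 : ℝ) - 0)) • cexp (c * x)
      = cexp ((c - 2 * π * I * n) * x) := by
    rw [fourier_coe_apply, smul_eq_mul, ← Complex.exp_add]
    congr 1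
    push_cast
    ring
  have hperiod : cexp ((c - 2 * π * I * n) * (1 : ℝ)) = cexp c := by
    rw [ofReal_one, mul_one, Complex.exp_sub, mul_comm, exp_int_mul_two_pi_mul_I, div_one]
  simp only [fourierCoeffOn_eq_integral, hprod, integral_exp_mul_complex hc, hperiod]
  simp

theorem ofReal_cosh_mul_sub_half (ρ x : ℝ) :
    (Real.cosh (ρ * (x - 1 / 2)) : ℂ)
      = cexp (-ρ / 2) / 2 * cexp (ρ * x) + cexp (ρ / 2) / 2 * cexp (-ρ * x) := by
  rw [ofReal_cosh, Complex.cosh, ← mul_div_right_comm, ← mul_div_right_comm, ← add_div,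
    ← Complex.exp_add, ← Complex.exp_add]
  push_cast
  ring_nf

theorem fourierCoeffOn_cosh_mul_sub_half {ρ : ℝ} (hρ : ρ ≠ 0) (n : ℤ) :
    fourierCoeffOn zero_lt_one (fun x : ℝ => (Real.cosh (ρ * (x - 1 / 2)) : ℂ)) n
      = ((Real.sinh (ρ / 2) * (2 * ρ / ((2 * π * n) ^ 2 + ρ ^ 2)) : ℝ) : ℂ) := by
  have hsub : (ρ : ℂ) - 2 * π * I * n ≠ 0 := fun h => hρ <| by simpa using congrArg re h
  have hadd : (ρ : ℂ) + 2 * π * I * n ≠ 0 := fun h => hρ <| by simpa using congrArg re h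
  have hneg : -(ρ : ℂ) - 2 * π * I * n = -(ρ + 2 * π * I * n) := by ring
  have hexp (a c : ℂ) : IntervalIntegrable (fun x : ℝ => a * cexp (c * x)) volume 0 1 :=
    (by fun_prop : Continuous _).intervalIntegrable 0 1
  simp_rw [ofReal_cosh_mul_sub_half]
  rw [fourierCoeffOn_add _ (hexp _ _) (hexp _ _), fourierCoeffOn.const_mul,
    fourierCoeffOn.const_mul, fourierCoeffOn_exp_mul _ _ hsub,
    fourierCoeffOn_exp_mul _ _ (hneg ▸ neg_ne_zero.2 hadd), hneg]
  have hnorm : ((2 * π * n) ^ 2 + ρ ^ 2 : ℂ) = (ρ - 2 * π * I * n) * (ρ + 2 * π * I * n) := by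
    linear_combination (2 * (π : ℂ) * n) ^ 2 * I_sq
  have hsq (z : ℂ) : cexp z = cexp (z / 2) ^ 2 := by rw [← Complex.exp_nat_mul]; ring_nf
  have hexp_half : cexp (ρ / 2) ≠ 0 := Complex.exp_ne_zero _
  push_cast
  rw [hnorm, Complex.sinh, hsq ρ, hsq (-ρ), neg_div, Complex.exp_neg]
  field_simp
  ring

theorem integral_cosh_mul_sub_half_sq {ρ : ℝ} (hρ : ρ ≠ 0) :
    ∫ x in (0 : ℝ)..1, Real.cosh (ρ * (x - 1 / 2)) ^ 2 = 1 / 2 + Real.sinh ρ / (2 * ρ) := by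
  have hderiv (x : ℝ) : HasDerivAt (fun y => y / 2 + Real.sinh (2 * ρ * (y - 1 / 2)) / (4 * ρ))
      (Real.cosh (ρ * (x - 1 / 2)) ^ 2) x := by
    have hinner := ((hasDerivAt_id x).sub_const (1 / 2)).const_mul (2 * ρ)
    refine (((hasDerivAt_id x).div_const 2).add (hinner.sinh.div_const (4 * ρ))).congr_deriv ?_
    rw [id, Real.cosh_sq, show 2 * ρ * (x - 1 / 2) = 2 * (ρ * (x - 1 / 2)) by ring,
      Real.cosh_two_mul, Real.cosh_sq]
    field_simp
    ring
  rw [intervalIntegral.integral_eq_sub_of_hasDerivAt (fun x _ => hderiv x)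
    ((by fun_prop : Continuous _).intervalIntegrable 0 1),
    show 2 * ρ * (1 - 1 / 2) = ρ by ring, show 2 * ρ * (0 - 1 / 2) = -ρ by ring, Real.sinh_neg]
  field_simp
  ring

theorem hasSum_sq_sinh_half_mul_div {ρ : ℝ} (hρ : ρ ≠ 0) :
    HasSum (fun n : ℤ => (Real.sinh (ρ / 2) * (2 * ρ / ((2 * π * n) ^ 2 + ρ ^ 2))) ^ 2)
      (1 / 2 + Real.sinh ρ / (2 * ρ)) := by
  have hcont : Continuous fun x : ℝ => (Real.cosh (ρ * (x - 1 / 2)) : ℂ) := by fun_prop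
  have hL2 : MemLp (fun x : ℝ => (Real.cosh (ρ * (x - 1 / 2)) : ℂ)) 2
      (volume.restrict (Set.Ioc 0 1)) :=
    (memLp_two_iff_integrable_sq_norm hcont.aestronglyMeasurable).2
      (hcont.norm.pow 2).integrableOn_Ioc
  have := hasSum_sq_fourierCoeffOn zero_lt_one hL2
  simp only [fourierCoeffOn_cosh_mul_sub_half hρ, norm_real, norm_eq_abs, sq_abs, sub_zero,
    inv_one, one_smul] at this
  rwa [integral_cosh_mul_sub_half_sq hρ] at this

theorem G2_closed_form (ρ : ℝ) (hρ : 0 < ρ) :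
    ∑' j : ℕ, (2 * ρ / ((2 * π * (j + 1)) ^ 2 + ρ ^ 2)) ^ 2
      = (ρ ^ 2 + ρ * Real.sinh ρ - 4 * Real.cosh ρ + 4)
        / (2 * ρ ^ 2 * (Real.cosh ρ - 1)) := by
  set s := Real.sinh (ρ / 2)
  have hs : s ≠ 0 := (Real.sinh_pos_iff.2 (half_pos hρ)).ne'
  have hcosh : Real.cosh ρ = 1 + 2 * s ^ 2 := by
    have h := Real.cosh_two_mul (ρ / 2)
    rw [mul_div_cancel₀ _ two_ne_zero, Real.cosh_sq'] at h
    linarith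
  have heven : Function.Even fun n : ℤ => (s * (2 * ρ / ((2 * π * n) ^ 2 + ρ ^ 2))) ^ 2 :=
    fun n => by push_cast; ring
  have hsum := (heven.hasSum_nat_succ (hasSum_sq_sinh_half_mul_div hρ.ne')).div_const (2 * s ^ 2)
  have hterm (j : ℕ) : 2 • (s * (2 * ρ / ((2 * π * ((j : ℤ) + 1 : ℤ)) ^ 2 + ρ ^ 2))) ^ 2
      / (2 * s ^ 2) = (2 * ρ / ((2 * π * (j + 1)) ^ 2 + ρ ^ 2)) ^ 2 := by
    rw [nsmul_eq_mul, mul_pow, Nat.cast_ofNat, ← mul_assoc, mul_div_cancel_left₀ _ (by positivity)]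
    norm_cast
  simp only [hterm] at hsum
  rw [hsum.tsum_eq, hcosh]
  push_cast
  field_simp
  ring
end

section
/- For all x > 0 and all ε with 0 < ε < 10⁻³, the first-order Taylor expansion of arctan satisfies the relative error bound |arctan(x+ε) - arctan(x) - ε/(1+x²)| < 10⁻⁶ · |arctan(x+ε)|. -/
set_option maxHeartbeats 1000000

open Real

lemma arctan_lower_cubic (s : ℝ) (hs : 0 ≤ s) : s - s ^ 3 / 3 ≤ Real.arctan s := by
  have h1 : Real.arctan s = ∫ t in (0:ℝ)..s, 1 / (1 + t ^ 2) := by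
    rw [integral_one_div_one_add_sq, Real.arctan_zero, sub_zero]
  have h2 : (∫ t in (0:ℝ)..s, (1 - t ^ 2)) = s - s ^ 3 / 3 := by
    rw [intervalIntegral.integral_sub intervalIntegrable_const
      ((continuous_pow 2).intervalIntegrable 0 s), integral_pow, intervalIntegral.integral_const]
    norm_num
  rw [h1, ← h2]
  apply intervalIntegral.integral_mono_on hs
  · exact ((continuous_const.sub (continuous_pow 2)).intervalIntegrable 0 s)
  · exact ((continuous_const.div (by continuity) (fun t => by positivity)).intervalIntegrable 0 s)
  · intro t _
    rw [le_div_iff₀ (by positivity)]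
    nlinarith [sq_nonneg (t ^ 2)]

lemma key_ineq (x ε : ℝ) (hx : 0 < x) (hε : 0 < ε) (hε' : ε < 1 / 1000) :
    x + ε / 3 ≤ (1 + x ^ 2) ^ 2 * Real.arctan (x + ε) := by
  rcases le_or_gt (x + ε) 1 with h | h
  · have hl := arctan_lower_cubic (x + ε) (by positivity)
    have hpoly : x + ε / 3 ≤ (1 + x ^ 2) ^ 2 * ((x + ε) - (x + ε) ^ 3 / 3) := by
      have hx1 : x ≤ 1 := by linarith
      have hε2 : ε ^ 2 ≤ 1 / 1000000 := by nlinarith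
      have hx3 : (0:ℝ) ≤ x ^ 3 := by positivity
      have b1 : ε ^ 3 ≤ ε / 1000000 := by nlinarith
      have b2 : x * ε ^ 2 ≤ ε / 1000 := by nlinarith [sq_nonneg ε]
      have b3 : x ^ 2 * ε ^ 3 ≤ ε / 1000000 := by nlinarith [sq_nonneg x, sq_nonneg ε, mul_pos hx hε]
      have b4 : x ^ 3 * ε ^ 2 ≤ x ^ 3 / 1000000 := by nlinarith
      have b5 : x ^ 4 * ε ≤ x ^ 3 / 1000 := by nlinarith [mul_nonneg hx3 hε.le, mul_nonneg (mul_nonneg hx3 hε.le) (sub_nonneg.2 hx1)]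
      have hx2 : x ^ 2 ≤ 1 := by nlinarith
      have hx4 : x ^ 4 ≤ 1 := by nlinarith
      have b6 : x ^ 4 * ε ^ 3 ≤ ε / 1000000 := by
        have h1 : x ^ 4 * ε ^ 3 ≤ 1 * ε ^ 3 :=
          mul_le_mul_of_nonneg_right hx4 (by positivity)
        linarith
      have b7 : x ^ 5 * ε ^ 2 ≤ x ^ 3 / 1000000 := by
        nlinarith [mul_nonneg (mul_nonneg hx3 (sq_nonneg ε)) (sub_nonneg.2 hx2), b4]
      have b8 : x ^ 6 * ε ≤ x ^ 3 / 1000 := by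
        nlinarith [mul_nonneg (mul_nonneg (pow_nonneg hx.le 4) hε.le) (sub_nonneg.2 hx2), b5]
      have b9 : x ^ 7 ≤ x ^ 3 := by
        nlinarith [mul_nonneg hx3 (sub_nonneg.2 hx4)]
      have hp1 : 0 ≤ x ^ 2 * ε := by positivity
      have hp2 : 0 ≤ x ^ 5 := by positivity
      nlinarith [b1, b2, b3, b4, b5, b6, b7, b8, b9, hp1, hp2, hx3, hε.le]
    calc x + ε / 3 ≤ (1 + x ^ 2) ^ 2 * ((x + ε) - (x + ε) ^ 3 / 3) := hpoly
      _ ≤ (1 + x ^ 2) ^ 2 * Real.arctan (x + ε) := by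
          apply mul_le_mul_of_nonneg_left hl (by positivity)
  · have hπ : (3 : ℝ) < π := Real.pi_gt_three
    have h1 : π / 4 ≤ Real.arctan (x + ε) := by
      rw [← Real.arctan_one]
      exact Real.arctan_strictMono.monotone h.le
    nlinarith [sq_nonneg (x - 1), sq_nonneg x, sq_nonneg (x ^ 2)]

theorem arctan_taylor_relative_error (x ε : ℝ) (hx : 0 < x)
    (hε : 0 < ε) (hε' : ε < 1 / 1000) :
    |Real.arctan (x + ε) - Real.arctan x - ε / (1 + x ^ 2)|
      < (1 / 1000000) * |Real.arctan (x + ε)| := by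
  set s := x + ε with hs
  have hxs : x ≤ s := by rw [hs]; linarith
  have hc : (0:ℝ) < 1 + x ^ 2 := by positivity
  have hint1 : IntervalIntegrable (fun t : ℝ => 1 / (1 + t ^ 2)) MeasureTheory.volume x s :=
    (continuous_const.div (by continuity) (fun t => by positivity)).intervalIntegrable x s
  have hint2 : IntervalIntegrable (fun _ : ℝ => 1 / (1 + x ^ 2)) MeasureTheory.volume x s :=
    intervalIntegrable_const
  have hintg : IntervalIntegrable (fun t : ℝ => (x ^ 2 - t ^ 2) / (1 + x ^ 2) ^ 2)
      MeasureTheory.volume x s :=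
    ((continuous_const.sub (continuous_pow 2)).div_const _).intervalIntegrable x s
  have hR : Real.arctan s - Real.arctan x - ε / (1 + x ^ 2)
      = ∫ t in x..s, (1 / (1 + t ^ 2) - 1 / (1 + x ^ 2)) := by
    rw [intervalIntegral.integral_sub hint1 hint2, integral_one_div_one_add_sq,
      intervalIntegral.integral_const, smul_eq_mul]
    have hsx : s - x = ε := by rw [hs]; ring
    rw [hsx]; ring
  have hRnonpos : Real.arctan s - Real.arctan x - ε / (1 + x ^ 2) ≤ 0 := by
    rw [hR]
    have h0 : (∫ t in x..s, (1 / (1 + t ^ 2) - 1 / (1 + x ^ 2)))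
        ≤ ∫ _t in x..s, (0:ℝ) := by
      apply intervalIntegral.integral_mono_on hxs (hint1.sub hint2) intervalIntegrable_const
      intro t ht
      have htx : x ≤ t := ht.1
      have h2 : (0:ℝ) < 1 + t ^ 2 := by positivity
      have hle : 1 + x ^ 2 ≤ 1 + t ^ 2 := by nlinarith
      have := one_div_le_one_div_of_le hc hle
      linarith
    simpa using h0
  have hcomp : (∫ t in x..s, (x ^ 2 - t ^ 2) / (1 + x ^ 2) ^ 2)
      ≤ ∫ t in x..s, (1 / (1 + t ^ 2) - 1 / (1 + x ^ 2)) := by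
    apply intervalIntegral.integral_mono_on hxs hintg (hint1.sub hint2)
    intro t ht
    have htx : x ≤ t := ht.1
    have h2 : (0:ℝ) < 1 + t ^ 2 := by positivity
    have heq : 1 / (1 + t ^ 2) - 1 / (1 + x ^ 2)
        = (x ^ 2 - t ^ 2) / ((1 + x ^ 2) * (1 + t ^ 2)) := by
      rw [div_sub_div _ _ h2.ne' hc.ne', div_eq_div_iff (by positivity) (by positivity)]
      ring
    rw [heq, div_le_div_iff₀ (by positivity) (by positivity)]
    have ht2 : 0 ≤ t ^ 2 - x ^ 2 := by nlinarith
    have hbr : 0 ≤ (1 + x ^ 2) * (1 + t ^ 2) - (1 + x ^ 2) ^ 2 := by nlinarith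
    nlinarith [mul_nonneg ht2 hbr]
  have hcalc : (∫ t in x..s, (x ^ 2 - t ^ 2) / (1 + x ^ 2) ^ 2)
      = -(ε ^ 2 * (x + ε / 3) / (1 + x ^ 2) ^ 2) := by
    rw [intervalIntegral.integral_div, intervalIntegral.integral_sub intervalIntegrable_const
      ((continuous_pow 2).intervalIntegrable x s), intervalIntegral.integral_const, integral_pow,
      smul_eq_mul, hs]
    field_simp
    ring
  rw [hcalc] at hcomp
  have hbound : -(Real.arctan s - Real.arctan x - ε / (1 + x ^ 2))
      ≤ ε ^ 2 * (x + ε / 3) / (1 + x ^ 2) ^ 2 := by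
    rw [hR]; linarith
  have hA : 0 < Real.arctan s := by
    have h0 : (0:ℝ) < s := by rw [hs]; linarith
    have := Real.arctan_strictMono h0
    simpa using this
  have hkey := key_ineq x ε hx hε hε'
  rw [abs_of_nonpos hRnonpos, abs_of_pos hA]
  have h1 : ε ^ 2 * (x + ε / 3) / (1 + x ^ 2) ^ 2 ≤ ε ^ 2 * Real.arctan s := by
    rw [div_le_iff₀ (by positivity)]
    calc ε ^ 2 * (x + ε / 3) ≤ ε ^ 2 * ((1 + x ^ 2) ^ 2 * Real.arctan s) :=
          mul_le_mul_of_nonneg_left hkey (by positivity)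
      _ = ε ^ 2 * Real.arctan s * (1 + x ^ 2) ^ 2 := by ring
  have h2 : ε ^ 2 * Real.arctan s < (1 / 1000000) * Real.arctan s := by
    apply mul_lt_mul_of_pos_right _ hA
    nlinarith
  linarith
end
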